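/- For every k ≥ 1, the set H_k^+ of permutations whose up-blocks all have length less than k is a well partial order with respect to containment ≺; the same holds for H_k^-. -/

import Mathlib

/-- A finite permutation: a length `n` together with a permutation of `{1,…,n}`
(modelled as `Fin n`). -/
def PermSeq : Type := Σ n : ℕ, Equiv.Perm (Fin n)

/-- `PermContains π ρ` : the permutation `π` is contained in `ρ` (written `π ≺ ρ`),
i.e. `ρ`, viewed as a sequence, has a subsequence order-isomorphic to `π`. -/
def PermContains {m n : ℕ} (π : Equiv.Perm (Fin m)) (ρ : Equiv.Perm (Fin n)) : Prop :=
  ∃ f : Fin m → Fin n, StrictMono f ∧ ∀ i j : Fin m, π i < π j ↔ ρ (f i) < ρ (f j)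

/-- Containment as a relation on `PermSeq`. -/
def PermLE (σ τ : PermSeq) : Prop := PermContains σ.2 τ.2

/-- A closed permutation class: downward closed under containment. -/
def IsCPC (X : Set PermSeq) : Prop := ∀ σ ∈ X, ∀ π : PermSeq, PermLE π σ → π ∈ X

/-- `countIn X n = |X ∩ S_n|`. -/
noncomputable def countIn (X : Set PermSeq) (n : ℕ) : ℕ := {π ∈ X | π.1 = n}.ncard

/-- The direct sum `σ ⊕ τ` of permutations: `(σ⊕τ)(i) = σ(i)` for `i` in the first block
and `(σ⊕τ)(m+i) = m + τ(i)` on the second block. -/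
def permOplus {m n : ℕ} (σ : Equiv.Perm (Fin m)) (τ : Equiv.Perm (Fin n)) :
    Equiv.Perm (Fin (m + n)) :=
  finSumFinEquiv.symm.trans ((Equiv.sumCongr σ τ).trans finSumFinEquiv)

/-- The skew sum `σ ⊖ τ` of permutations: `(σ⊖τ)(i) = n + σ(i)` for `i` in the first block
and `(σ⊖τ)(m+i) = τ(i)` on the second block. -/
def permOminus {m n : ℕ} (σ : Equiv.Perm (Fin m)) (τ : Equiv.Perm (Fin n)) :
    Equiv.Perm (Fin (m + n)) :=
  finSumFinEquiv.symm.trans ((Equiv.sumCongr σ τ).trans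
    ((Equiv.sumComm (Fin m) (Fin n)).trans (finSumFinEquiv.trans (finCongr (Nat.add_comm n m)))))

/-- Direct sum on `PermSeq`. -/
def PermSeq.oplus (σ τ : PermSeq) : PermSeq := ⟨σ.1 + τ.1, permOplus σ.2 τ.2⟩

/-- Skew sum on `PermSeq`. -/
def PermSeq.ominus (σ τ : PermSeq) : PermSeq := ⟨σ.1 + τ.1, permOminus σ.2 τ.2⟩

/-- A permutation is up-indecomposable if it is not the direct sum of two nonempty
permutations. -/
def UpIndec (π : PermSeq) : Prop :=
  ¬ ∃ σ τ : PermSeq, 1 ≤ σ.1 ∧ 1 ≤ τ.1 ∧ π = PermSeq.oplus σ τ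

/-- A permutation is down-indecomposable if it is not the skew sum of two nonempty
permutations. -/
def DownIndec (π : PermSeq) : Prop :=
  ¬ ∃ σ τ : PermSeq, 1 ≤ σ.1 ∧ 1 ≤ τ.1 ∧ π = PermSeq.ominus σ τ

/-- Direct sum of a list of permutations. -/
def listOplus (l : List PermSeq) : PermSeq := l.foldr PermSeq.oplus ⟨0, 1⟩

/-- Skew sum of a list of permutations. -/
def listOminus (l : List PermSeq) : PermSeq := l.foldr PermSeq.ominus ⟨0, 1⟩

/-- `π ∈ H_k^+` : all up-blocks of the (unique) up-decomposition of `π` into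
up-indecomposable permutations have length `< k`. -/
def HUp (k : ℕ) (π : PermSeq) : Prop :=
  ∃ l : List PermSeq, (∀ σ ∈ l, UpIndec σ ∧ σ.1 < k) ∧ π = listOplus l

/-- `π ∈ H_k^-` : all down-blocks of the (unique) down-decomposition of `π` into
down-indecomposable permutations have length `< k`. -/
def HDown (k : ℕ) (π : PermSeq) : Prop :=
  ∃ l : List PermSeq, (∀ σ ∈ l, DownIndec σ ∧ σ.1 < k) ∧ π = listOminus l

/-- `(s, ≺)` is a well partial order: it has no infinite strictly descending chains and
no infinite antichains. -/
def IsWpoOn (s : Set PermSeq) : Prop :=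
  (¬ ∃ f : ℕ → PermSeq, (∀ i, f i ∈ s) ∧
      ∀ i, PermLE (f (i + 1)) (f i) ∧ f (i + 1) ≠ f i) ∧
  (¬ ∃ f : ℕ → PermSeq, (∀ i, f i ∈ s) ∧ ∀ i j, i ≠ j → ¬ PermLE (f i) (f j))

/-!
A permutation of `H_k^+` is the direct sum of a word over the finite alphabet of
up-indecomposable permutations of length `< k`. The direct sum is monotone for `≺` in
both arguments and `τ ≺ σ ⊕ τ`, so a subword embedding of block words yields a containment
of the sums. Higman's lemma over the finite alphabet therefore excludes infinite
antichains, and infinite strictly descending chains cannot exist since a proper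
containment between permutations strictly decreases the length. The skew sum behaves the
same way, which gives `H_k^-`.
-/

lemma permContains_refl {m : ℕ} (π : Equiv.Perm (Fin m)) : PermContains π π :=
  ⟨id, strictMono_id, fun _ _ => Iff.rfl⟩

lemma PermContains.trans {m n p : ℕ} {π : Equiv.Perm (Fin m)} {ρ : Equiv.Perm (Fin n)}
    {χ : Equiv.Perm (Fin p)} (h₁ : PermContains π ρ) (h₂ : PermContains ρ χ) :
    PermContains π χ := by
  obtain ⟨f, hf, hfπ⟩ := h₁
  obtain ⟨g, hg, hgρ⟩ := h₂
  exact ⟨g ∘ f, hg.comp hf, fun i j => (hfπ i j).trans (hgρ (f i) (f j))⟩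

lemma PermContains.eq {m : ℕ} {π ρ : Equiv.Perm (Fin m)} (h : PermContains π ρ) :
    π = ρ := by
  obtain ⟨f, hf, hfπ⟩ := h
  obtain rfl : f = id := hf.eq_id
  have hmono : StrictMono (ρ ∘ π.symm) := fun a b hab => (hfπ _ _).1 (by simpa using hab)
  refine Equiv.ext fun i => ?_
  simpa using (congrFun hmono.eq_id (π i)).symm

instance : IsPreorder PermSeq PermLE where
  refl σ := permContains_refl σ.2
  trans _ _ _ := PermContains.trans

lemma PermLE.fst_le {σ τ : PermSeq} (h : PermLE σ τ) : σ.1 ≤ τ.1 := by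
  obtain ⟨f, hf, -⟩ := h
  simpa using Fintype.card_le_of_injective f hf.injective

lemma PermLE.eq_of_fst_eq {σ τ : PermSeq} (h : PermLE σ τ) (hst : σ.1 = τ.1) : σ = τ := by
  obtain ⟨m, π⟩ := σ
  obtain ⟨n, ρ⟩ := τ
  obtain rfl : m = n := hst
  exact congrArg (Sigma.mk m) h.eq

lemma permLE_empty (τ : PermSeq) : PermLE ⟨0, 1⟩ τ :=
  ⟨Fin.elim0, fun a => a.elim0, fun i => i.elim0⟩

namespace Fin

@[simp] lemma castAdd_lt_castAdd_iff {m : ℕ} (n : ℕ) {i j : Fin m} :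
    castAdd n i < castAdd n j ↔ i < j := Iff.rfl

@[simp] lemma castAdd_lt_natAdd {m n : ℕ} (i : Fin m) (j : Fin n) : castAdd n i < natAdd m j :=
  lt_def.2 (by simp only [val_castAdd, val_natAdd]; omega)

@[simp] lemma not_natAdd_lt_castAdd {m n : ℕ} (i : Fin m) (j : Fin n) :
    ¬ natAdd m j < castAdd n i :=
  (castAdd_lt_natAdd i j).asymm

def sumMap {m n m' n' : ℕ} (f : Fin m → Fin m') (g : Fin n → Fin n') :
    Fin (m + n) → Fin (m' + n') :=
  addCases (fun i => castAdd n' (f i)) (fun i => natAdd m' (g i))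

@[simp] lemma sumMap_castAdd {m n m' n' : ℕ} (f : Fin m → Fin m') (g : Fin n → Fin n')
    (i : Fin m) : sumMap f g (castAdd n i) = castAdd n' (f i) :=
  addCases_left i

@[simp] lemma sumMap_natAdd {m n m' n' : ℕ} (f : Fin m → Fin m') (g : Fin n → Fin n')
    (i : Fin n) : sumMap f g (natAdd m i) = natAdd m' (g i) :=
  addCases_right i

lemma _root_.StrictMono.finSumMap {m n m' n' : ℕ} {f : Fin m → Fin m'} {g : Fin n → Fin n'}
    (hf : StrictMono f) (hg : StrictMono g) : StrictMono (sumMap f g) := by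
  intro a b
  induction a using addCases <;> induction b using addCases <;>
    simp [hf.lt_iff_lt, hg.lt_iff_lt]

end Fin

@[simp] lemma permOplus_castAdd {m n : ℕ} (σ : Equiv.Perm (Fin m)) (τ : Equiv.Perm (Fin n))
    (i : Fin m) : permOplus σ τ (Fin.castAdd n i) = Fin.castAdd n (σ i) := by
  simp [permOplus]

@[simp] lemma permOplus_natAdd {m n : ℕ} (σ : Equiv.Perm (Fin m)) (τ : Equiv.Perm (Fin n))
    (i : Fin n) : permOplus σ τ (Fin.natAdd m i) = Fin.natAdd m (τ i) := by
  simp [permOplus]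

@[simp] lemma permOminus_castAdd {m n : ℕ} (σ : Equiv.Perm (Fin m)) (τ : Equiv.Perm (Fin n))
    (i : Fin m) :
    permOminus σ τ (Fin.castAdd n i) = Fin.cast (Nat.add_comm n m) (Fin.natAdd n (σ i)) := by
  simp [permOminus]

@[simp] lemma permOminus_natAdd {m n : ℕ} (σ : Equiv.Perm (Fin m)) (τ : Equiv.Perm (Fin n))
    (i : Fin n) :
    permOminus σ τ (Fin.natAdd m i) = Fin.cast (Nat.add_comm n m) (Fin.castAdd m (τ i)) := by
  simp [permOminus]

lemma permContains_oplus {m n m' n' : ℕ} {σ : Equiv.Perm (Fin m)} {τ : Equiv.Perm (Fin n)}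
    {σ' : Equiv.Perm (Fin m')} {τ' : Equiv.Perm (Fin n')}
    (h₁ : PermContains σ σ') (h₂ : PermContains τ τ') :
    PermContains (permOplus σ τ) (permOplus σ' τ') := by
  obtain ⟨f, hf, hfσ⟩ := h₁
  obtain ⟨g, hg, hgτ⟩ := h₂
  refine ⟨Fin.sumMap f g, hf.finSumMap hg, fun i j => ?_⟩
  induction i using Fin.addCases <;> induction j using Fin.addCases <;> simp [hfσ, hgτ]

lemma permContains_ominus {m n m' n' : ℕ} {σ : Equiv.Perm (Fin m)} {τ : Equiv.Perm (Fin n)}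
    {σ' : Equiv.Perm (Fin m')} {τ' : Equiv.Perm (Fin n')}
    (h₁ : PermContains σ σ') (h₂ : PermContains τ τ') :
    PermContains (permOminus σ τ) (permOminus σ' τ') := by
  obtain ⟨f, hf, hfσ⟩ := h₁
  obtain ⟨g, hg, hgτ⟩ := h₂
  refine ⟨Fin.sumMap f g, hf.finSumMap hg, fun i j => ?_⟩
  induction i using Fin.addCases <;> induction j using Fin.addCases <;>
    simp only [Fin.sumMap_castAdd, Fin.sumMap_natAdd, permOminus_castAdd, permOminus_natAdd,
      Fin.cast_lt_cast, Fin.castAdd_lt_castAdd_iff, Fin.natAdd_lt_natAdd_iff,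
      Fin.castAdd_lt_natAdd, Fin.not_natAdd_lt_castAdd, hfσ, hgτ]

lemma permContains_oplus_of_right {n m' n' : ℕ} {τ : Equiv.Perm (Fin n)}
    (σ' : Equiv.Perm (Fin m')) {τ' : Equiv.Perm (Fin n')}
    (h : PermContains τ τ') : PermContains τ (permOplus σ' τ') := by
  obtain ⟨g, hg, hgτ⟩ := h
  exact ⟨Fin.natAdd m' ∘ g, (Fin.strictMono_natAdd m').comp hg, by simp [hgτ]⟩

lemma permContains_ominus_of_right {n m' n' : ℕ} {τ : Equiv.Perm (Fin n)}
    (σ' : Equiv.Perm (Fin m')) {τ' : Equiv.Perm (Fin n')}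
    (h : PermContains τ τ') : PermContains τ (permOminus σ' τ') := by
  obtain ⟨g, hg, hgτ⟩ := h
  exact ⟨Fin.natAdd m' ∘ g, (Fin.strictMono_natAdd m').comp hg, by simp [hgτ]⟩

lemma PermLE.oplus {σ σ' τ τ' : PermSeq} (h₁ : PermLE σ σ') (h₂ : PermLE τ τ') :
    PermLE (σ.oplus τ) (σ'.oplus τ') :=
  permContains_oplus h₁ h₂

lemma PermLE.ominus {σ σ' τ τ' : PermSeq} (h₁ : PermLE σ σ') (h₂ : PermLE τ τ') :
    PermLE (σ.ominus τ) (σ'.ominus τ') :=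
  permContains_ominus h₁ h₂

lemma permLE_oplus_left (σ : PermSeq) {τ τ' : PermSeq} (h : PermLE τ τ') :
    PermLE τ (σ.oplus τ') :=
  permContains_oplus_of_right σ.2 h

lemma permLE_ominus_left (σ : PermSeq) {τ τ' : PermSeq} (h : PermLE τ τ') :
    PermLE τ (σ.ominus τ') :=
  permContains_ominus_of_right σ.2 h

lemma PermSeq.finite_setOf_fst_lt (k : ℕ) : {σ : PermSeq | σ.1 < k}.Finite := by
  refine (Set.finite_lt_nat k).preimage' fun n _ => (Set.finite_range (Sigma.mk n)).subset ?_
  rintro ⟨m, π⟩ rfl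
  exact ⟨π, rfl⟩

lemma isWpoOn_of_partiallyWellOrderedOn {s : Set PermSeq}
    (hs : s.PartiallyWellOrderedOn PermLE) : IsWpoOn s := by
  constructor
  · rintro ⟨f, -, hf⟩
    obtain ⟨n, hn⟩ := WellFounded.not_rel_apply_succ (r := (· < ·)) fun i => (f i).1
    exact hn ((hf n).1.fst_le.lt_of_ne fun h => (hf n).2 ((hf n).1.eq_of_fst_eq h))
  · rintro ⟨f, hfs, hf⟩
    obtain ⟨m, n, hmn, h⟩ := hs.exists_lt hfs
    exact hf m n hmn.ne h

section Foldr

variable {α : Type*} {r : α → α → Prop} {op : α → α → α} {e : α}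

lemma List.SublistForall₂.foldr (e_le : ∀ a, r e a)
    (mono : ∀ {a a' b b'}, r a a' → r b b' → r (op a b) (op a' b'))
    (le_op : ∀ a {b b'}, r b b' → r b (op a b')) {l₁ l₂ : List α}
    (h : List.SublistForall₂ r l₁ l₂) : r (l₁.foldr op e) (l₂.foldr op e) := by
  induction h with
  | nil => exact e_le _
  | cons hab _ ih => exact mono hab ih
  | cons_right _ ih => exact le_op _ ih

theorem Set.PartiallyWellOrderedOn.setOf_foldr [IsPreorder α r] (e_le : ∀ a, r e a)
    (mono : ∀ {a a' b b'}, r a a' → r b b' → r (op a b) (op a' b'))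
    (le_op : ∀ a {b b'}, r b b' → r b (op a b')) {B : Set α}
    (hB : B.PartiallyWellOrderedOn r) :
    {x | ∃ l, (∀ a ∈ l, a ∈ B) ∧ x = List.foldr op e l}.PartiallyWellOrderedOn r := by
  convert (partiallyWellOrderedOn_sublistForall₂ r hB).image_of_monotone_on
    (f := fun l => l.foldr op e) fun _ _ _ _ h => h.foldr e_le mono le_op using 1
  ext x
  simp [eq_comm]

end Foldr

theorem HUp_HDown_wpo_general (k : ℕ) :
    IsWpoOn {π : PermSeq | HUp k π} ∧ IsWpoOn {π : PermSeq | HDown k π} := by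
  have hblocks (P : PermSeq → Prop) : {σ | P σ ∧ σ.1 < k}.PartiallyWellOrderedOn PermLE :=
    ((PermSeq.finite_setOf_fst_lt k).subset fun _ h => h.2).partiallyWellOrderedOn
  exact ⟨isWpoOn_of_partiallyWellOrderedOn <|
      (hblocks UpIndec).setOf_foldr permLE_empty PermLE.oplus permLE_oplus_left,
    isWpoOn_of_partiallyWellOrderedOn <|
      (hblocks DownIndec).setOf_foldr permLE_empty PermLE.ominus permLE_ominus_left⟩

/-- For every `k ≥ 1`, the set `H_k^+` of permutations all of whose up-blocks have length
less than `k` is a well partial order under containment; the same holds for `H_k^-`. -/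
theorem HUp_HDown_wpo (k : ℕ) (hk : 1 ≤ k) :
    IsWpoOn {π : PermSeq | HUp k π} ∧ IsWpoOn {π : PermSeq | HDown k π} :=
  HUp_HDown_wpo_general k
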